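/- Let R₂ = ℚ[x₁,…,x₇]/I₂, where I₂ is the ideal generated by the linear forms x₁−x₅+x₇, x₂−x₅+x₇, x₃−x₅+x₇, x₄−x₅−x₆+x₇ and the monomials x₁x₂x₃, x₄x₆, x₅x₇. Then the images of the twelve monomials 1, x₅, x₆, x₇, x₅², x₆², x₆x₇, x₇², x₆³, x₆²x₇, x₇³, x₆x₇³ form a ℚ-vector space basis of R₂; in particular dim_ℚ R₂ = 12. -/

import Mathlib

open MvPolynomial

noncomputable section

/-- The Stanley–Reisner-style presentation ideal for `H^*(X(Δ₂), ℚ)`.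
Variables `X 0, …, X 6` correspond to `x₁, …, x₇`. -/
def I2 : Ideal (MvPolynomial (Fin 7) ℚ) := Ideal.span
  {X 0 - X 4 + X 6, X 1 - X 4 + X 6, X 2 - X 4 + X 6, X 3 - X 4 - X 5 + X 6,
   X 0 * X 1 * X 2, X 3 * X 5, X 4 * X 6}

/-- The rational cohomology ring of `X(Δ₂)`. -/
def R2 : Type := MvPolynomial (Fin 7) ℚ ⧸ I2

instance : CommRing R2 := Ideal.Quotient.commRing I2
instance : Algebra ℚ R2 := Ideal.Quotient.algebra ℚ

/-- The twelve monomials `1, x₅, x₆, x₇, x₅², x₆², x₆x₇, x₇², x₆³, x₆²x₇, x₇³, x₆x₇³`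
in `R₂`. -/
def r2BasisElems : Fin 12 → R2 := fun i =>
  Ideal.Quotient.mk I2
    (![1, X 4, X 5, X 6, X 4 ^ 2, X 5 ^ 2, X 5 * X 6, X 6 ^ 2,
       X 5 ^ 3, X 5 ^ 2 * X 6, X 6 ^ 3, X 5 * X 6 ^ 3] i)

namespace R2Aux

abbrev qk : MvPolynomial (Fin 7) ℚ →+* R2 := Ideal.Quotient.mk I2
abbrev uu : R2 := qk (X 4)
abbrev vv : R2 := qk (X 5)
abbrev ww : R2 := qk (X 6)

lemma hg0 : (X 0 - X 4 + X 6 : MvPolynomial (Fin 7) ℚ) ∈ I2 :=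
  Ideal.subset_span (by simp)
lemma hg1 : (X 1 - X 4 + X 6 : MvPolynomial (Fin 7) ℚ) ∈ I2 :=
  Ideal.subset_span (by simp)
lemma hg2 : (X 2 - X 4 + X 6 : MvPolynomial (Fin 7) ℚ) ∈ I2 :=
  Ideal.subset_span (by simp)
lemma hg3 : (X 3 - X 4 - X 5 + X 6 : MvPolynomial (Fin 7) ℚ) ∈ I2 :=
  Ideal.subset_span (by simp)
lemma hg4 : (X 0 * X 1 * X 2 : MvPolynomial (Fin 7) ℚ) ∈ I2 :=
  Ideal.subset_span (by simp)
lemma hg5 : (X 3 * X 5 : MvPolynomial (Fin 7) ℚ) ∈ I2 :=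
  Ideal.subset_span (by simp)
lemma hg6 : (X 4 * X 6 : MvPolynomial (Fin 7) ℚ) ∈ I2 :=
  Ideal.subset_span (by simp)

lemma hX0 : qk (X 0) = uu - ww := by
  rw [← map_sub]
  refine Ideal.Quotient.eq.mpr ?_
  have h : (X 0 : MvPolynomial (Fin 7) ℚ) - (X 4 - X 6) = X 0 - X 4 + X 6 := by ring
  rw [h]; exact hg0

lemma hX1 : qk (X 1) = uu - ww := by
  rw [← map_sub]
  refine Ideal.Quotient.eq.mpr ?_
  have h : (X 1 : MvPolynomial (Fin 7) ℚ) - (X 4 - X 6) = X 1 - X 4 + X 6 := by ring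
  rw [h]; exact hg1

lemma hX2 : qk (X 2) = uu - ww := by
  rw [← map_sub]
  refine Ideal.Quotient.eq.mpr ?_
  have h : (X 2 : MvPolynomial (Fin 7) ℚ) - (X 4 - X 6) = X 2 - X 4 + X 6 := by ring
  rw [h]; exact hg2

lemma hX3 : qk (X 3) = uu + vv - ww := by
  rw [← map_add, ← map_sub]
  refine Ideal.Quotient.eq.mpr ?_
  have h : (X 3 : MvPolynomial (Fin 7) ℚ) - (X 4 + X 5 - X 6) = X 3 - X 4 - X 5 + X 6 := by
    ring
  rw [h]; exact hg3

lemma rel1 : uu * ww = 0 := by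
  have h : qk (X 4 * X 6) = 0 := Ideal.Quotient.eq_zero_iff_mem.mpr hg6
  rwa [map_mul] at h

lemma rel2 : vv * (uu + vv - ww) = 0 := by
  have h : qk (X 3 * X 5) = 0 := Ideal.Quotient.eq_zero_iff_mem.mpr hg5
  rw [map_mul, hX3] at h
  rw [mul_comm]; exact h

lemma rel3 : (uu - ww) ^ 3 = 0 := by
  have h : qk (X 0 * X 1 * X 2) = 0 := Ideal.Quotient.eq_zero_iff_mem.mpr hg4
  rw [map_mul, map_mul, hX0, hX1, hX2] at h
  calc (uu - ww) ^ 3 = (uu - ww) * (uu - ww) * (uu - ww) := by ring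
  _ = 0 := h


def TT : Submodule ℚ R2 := Submodule.span ℚ (Set.range r2BasisElems)

lemma hr (i : Fin 12) : r2BasisElems i ∈ TT := Submodule.subset_span ⟨i, rfl⟩

lemma t0 : (1 : R2) ∈ TT := (map_one qk : r2BasisElems 0 = 1) ▸ hr 0
lemma t1 : uu ∈ TT := hr 1
lemma t2 : vv ∈ TT := hr 2
lemma t3 : ww ∈ TT := hr 3
lemma t4 : uu ^ 2 ∈ TT := (map_pow _ _ 2 : r2BasisElems 4 = uu ^ 2) ▸ hr 4
lemma t5 : vv ^ 2 ∈ TT := (map_pow _ _ 2 : r2BasisElems 5 = vv ^ 2) ▸ hr 5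
lemma t6 : vv * ww ∈ TT := (map_mul _ _ _ : r2BasisElems 6 = vv * ww) ▸ hr 6
lemma t7 : ww ^ 2 ∈ TT := (map_pow _ _ 2 : r2BasisElems 7 = ww ^ 2) ▸ hr 7
lemma t8 : vv ^ 3 ∈ TT := (map_pow _ _ 3 : r2BasisElems 8 = vv ^ 3) ▸ hr 8
lemma t9 : vv ^ 2 * ww ∈ TT := by
  have h : r2BasisElems 9 = vv ^ 2 * ww := by
    rw [show r2BasisElems 9 = qk (X 5 ^ 2 * X 6) from rfl, map_mul, map_pow]
  exact h ▸ hr 9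
lemma t10 : ww ^ 3 ∈ TT := (map_pow _ _ 3 : r2BasisElems 10 = ww ^ 3) ▸ hr 10
lemma t11 : vv * ww ^ 3 ∈ TT := by
  have h : r2BasisElems 11 = vv * ww ^ 3 := by
    rw [show r2BasisElems 11 = qk (X 5 * X 6 ^ 3) from rfl, map_mul, map_pow]
  exact h ▸ hr 11

lemma hmul_u : ∀ x ∈ TT, uu * x ∈ TT := by
  intro x hx
  induction hx using Submodule.span_induction with
  | mem x h =>
    obtain ⟨i, rfl⟩ := h
    fin_cases i
    · show uu * qk 1 ∈ TT
      rw [map_one, mul_one]; exact t1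
    · show uu * uu ∈ TT
      rw [← sq]; exact t4
    · show uu * vv ∈ TT
      have h : uu * vv = vv * ww - vv ^ 2 := by linear_combination rel2
      rw [h]; exact TT.sub_mem t6 t5
    · show uu * ww ∈ TT
      rw [rel1]; exact TT.zero_mem
    · show uu * qk (X 4 ^ 2) ∈ TT
      rw [map_pow]
      have h : uu * uu ^ 2 = ww ^ 3 := by
        linear_combination (3 * uu - 3 * ww) * rel1 + rel3
      rw [h]; exact t10
    · show uu * qk (X 5 ^ 2) ∈ TT
      rw [map_pow]
      have h : uu * vv ^ 2 = vv ^ 2 * ww - vv ^ 3 := by linear_combination vv * rel2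
      rw [h]; exact TT.sub_mem t9 t8
    · show uu * qk (X 5 * X 6) ∈ TT
      rw [map_mul]
      have h : uu * (vv * ww) = 0 := by linear_combination vv * rel1
      rw [h]; exact TT.zero_mem
    · show uu * qk (X 6 ^ 2) ∈ TT
      rw [map_pow]
      have h : uu * ww ^ 2 = 0 := by linear_combination ww * rel1
      rw [h]; exact TT.zero_mem
    · show uu * qk (X 5 ^ 3) ∈ TT
      rw [map_pow]
      have h : uu * vv ^ 3 = vv * ww ^ 3 := by
        linear_combination (-3 * vv * ww + vv ^ 2 + 2 * uu * vv) * rel1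
          + (uu * vv - uu ^ 2) * rel2 + vv * rel3
      rw [h]; exact t11
    · show uu * qk (X 5 ^ 2 * X 6) ∈ TT
      rw [map_mul, map_pow]
      have h : uu * (vv ^ 2 * ww) = 0 := by linear_combination vv ^ 2 * rel1
      rw [h]; exact TT.zero_mem
    · show uu * qk (X 6 ^ 3) ∈ TT
      rw [map_pow]
      have h : uu * ww ^ 3 = 0 := by linear_combination ww ^ 2 * rel1
      rw [h]; exact TT.zero_mem
    · show uu * qk (X 5 * X 6 ^ 3) ∈ TT
      rw [map_mul, map_pow]
      have h : uu * (vv * ww ^ 3) = 0 := by linear_combination vv * ww ^ 2 * rel1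
      rw [h]; exact TT.zero_mem
  | zero => rw [mul_zero]; exact TT.zero_mem
  | add x y _ _ ihx ihy => rw [mul_add]; exact TT.add_mem ihx ihy
  | smul a x _ ih => rw [mul_smul_comm]; exact TT.smul_mem a ih


lemma hmul_v : ∀ x ∈ TT, vv * x ∈ TT := by
  intro x hx
  induction hx using Submodule.span_induction with
  | mem x h =>
    obtain ⟨i, rfl⟩ := h
    fin_cases i
    · show vv * qk 1 ∈ TT
      rw [map_one, mul_one]; exact t2
    · show vv * uu ∈ TT
      have h : vv * uu = vv * ww - vv ^ 2 := by linear_combination rel2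
      rw [h]; exact TT.sub_mem t6 t5
    · show vv * vv ∈ TT
      rw [← sq]; exact t5
    · show vv * ww ∈ TT
      exact t6
    · show vv * qk (X 4 ^ 2) ∈ TT
      rw [map_pow]
      have h : vv * uu ^ 2 = vv ^ 3 - vv ^ 2 * ww := by
        linear_combination vv * rel1 + (uu - vv) * rel2
      rw [h]; exact TT.sub_mem t8 t9
    · show vv * qk (X 5 ^ 2) ∈ TT
      rw [map_pow]
      have h : vv * vv ^ 2 = vv ^ 3 := by ring
      rw [h]; exact t8
    · show vv * qk (X 5 * X 6) ∈ TT
      rw [map_mul]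
      have h : vv * (vv * ww) = vv ^ 2 * ww := by ring
      rw [h]; exact t9
    · show vv * qk (X 6 ^ 2) ∈ TT
      rw [map_pow]
      have h : vv * ww ^ 2 = vv ^ 2 * ww := by linear_combination vv * rel1 - ww * rel2
      rw [h]; exact t9
    · show vv * qk (X 5 ^ 3) ∈ TT
      rw [map_pow]
      have h : vv * vv ^ 3 = 0 := by
        linear_combination (2 * vv * ww - 2 * vv ^ 2 - 2 * uu * vv) * rel1
          + (ww ^ 2 + vv * ww + vv ^ 2 - uu * vv + uu ^ 2) * rel2 + (-vv) * rel3
      rw [h]; exact TT.zero_mem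
    · show vv * qk (X 5 ^ 2 * X 6) ∈ TT
      rw [map_mul, map_pow]
      have h : vv * (vv ^ 2 * ww) = vv * ww ^ 3 := by
        linear_combination (-(vv * ww) - vv ^ 2) * rel1 + (ww ^ 2 + vv * ww) * rel2
      rw [h]; exact t11
    · show vv * qk (X 6 ^ 3) ∈ TT
      rw [map_pow]; exact t11
    · show vv * qk (X 5 * X 6 ^ 3) ∈ TT
      rw [map_mul, map_pow]
      have h : vv * (vv * ww ^ 3) = 0 := by
        linear_combination (2 * vv * ww ^ 2 - 3 * uu * vv * ww + uu ^ 2 * vv) * rel1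
          + ww ^ 3 * rel2 + (-(vv * ww)) * rel3
      rw [h]; exact TT.zero_mem
  | zero => rw [mul_zero]; exact TT.zero_mem
  | add x y _ _ ihx ihy => rw [mul_add]; exact TT.add_mem ihx ihy
  | smul a x _ ih => rw [mul_smul_comm]; exact TT.smul_mem a ih

lemma hmul_w : ∀ x ∈ TT, ww * x ∈ TT := by
  intro x hx
  induction hx using Submodule.span_induction with
  | mem x h =>
    obtain ⟨i, rfl⟩ := h
    fin_cases i
    · show ww * qk 1 ∈ TT
      rw [map_one, mul_one]; exact t3
    · show ww * uu ∈ TT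
      have h : ww * uu = 0 := by linear_combination rel1
      rw [h]; exact TT.zero_mem
    · show ww * vv ∈ TT
      rw [mul_comm]; exact t6
    · show ww * ww ∈ TT
      rw [← sq]; exact t7
    · show ww * qk (X 4 ^ 2) ∈ TT
      rw [map_pow]
      have h : ww * uu ^ 2 = 0 := by linear_combination uu * rel1
      rw [h]; exact TT.zero_mem
    · show ww * qk (X 5 ^ 2) ∈ TT
      rw [map_pow]
      have h : ww * vv ^ 2 = vv ^ 2 * ww := by ring
      rw [h]; exact t9
    · show ww * qk (X 5 * X 6) ∈ TT
      rw [map_mul]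
      have h : ww * (vv * ww) = vv ^ 2 * ww := by
        linear_combination vv * rel1 - ww * rel2
      rw [h]; exact t9
    · show ww * qk (X 6 ^ 2) ∈ TT
      rw [map_pow]
      have h : ww * ww ^ 2 = ww ^ 3 := by ring
      rw [h]; exact t10
    · show ww * qk (X 5 ^ 3) ∈ TT
      rw [map_pow]
      have h : ww * vv ^ 3 = vv * ww ^ 3 := by
        linear_combination (-(vv * ww) - vv ^ 2) * rel1 + (ww ^ 2 + vv * ww) * rel2
      rw [h]; exact t11
    · show ww * qk (X 5 ^ 2 * X 6) ∈ TT
      rw [map_mul, map_pow]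
      have h : ww * (vv ^ 2 * ww) = vv * ww ^ 3 := by
        linear_combination (-(vv * ww)) * rel1 + ww ^ 2 * rel2
      rw [h]; exact t11
    · show ww * qk (X 6 ^ 3) ∈ TT
      rw [map_pow]
      have h : ww * ww ^ 3 = 0 := by
        linear_combination (3 * ww ^ 2 - 3 * uu * ww + uu ^ 2) * rel1 + (-ww) * rel3
      rw [h]; exact TT.zero_mem
    · show ww * qk (X 5 * X 6 ^ 3) ∈ TT
      rw [map_mul, map_pow]
      have h : ww * (vv * ww ^ 3) = 0 := by
        linear_combination (3 * vv * ww ^ 2 - 3 * uu * vv * ww + uu ^ 2 * vv) * rel1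
          + (-(vv * ww)) * rel3
      rw [h]; exact TT.zero_mem
  | zero => rw [mul_zero]; exact TT.zero_mem
  | add x y _ _ ihx ihy => rw [mul_add]; exact TT.add_mem ihx ihy
  | smul a x _ ih => rw [mul_smul_comm]; exact TT.smul_mem a ih

lemma span_top : TT = ⊤ := by
  rw [Submodule.eq_top_iff']
  intro x
  obtain ⟨p, rfl⟩ := Ideal.Quotient.mk_surjective (I := I2) x
  induction p using MvPolynomial.induction_on with
  | C a =>
    have h : (qk (C a) : R2) = a • (1 : R2) := by
      rw [Algebra.smul_def, mul_one]; rfl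
    exact h ▸ TT.smul_mem a t0
  | add p q hp hq =>
    rw [map_add]; exact TT.add_mem hp hq
  | mul_X p i hp =>
    rw [map_mul]
    fin_cases i
    · show qk p * qk (X 0) ∈ TT
      rw [hX0]
      have h : (qk p : R2) * (uu - ww) = uu * qk p - ww * qk p := by ring
      rw [h]; exact TT.sub_mem (hmul_u _ hp) (hmul_w _ hp)
    · show qk p * qk (X 1) ∈ TT
      rw [hX1]
      have h : (qk p : R2) * (uu - ww) = uu * qk p - ww * qk p := by ring
      rw [h]; exact TT.sub_mem (hmul_u _ hp) (hmul_w _ hp)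
    · show qk p * qk (X 2) ∈ TT
      rw [hX2]
      have h : (qk p : R2) * (uu - ww) = uu * qk p - ww * qk p := by ring
      rw [h]; exact TT.sub_mem (hmul_u _ hp) (hmul_w _ hp)
    · show qk p * qk (X 3) ∈ TT
      rw [hX3]
      have h : (qk p : R2) * (uu + vv - ww) = uu * qk p + vv * qk p - ww * qk p := by ring
      rw [h]
      exact TT.sub_mem (TT.add_mem (hmul_u _ hp) (hmul_v _ hp)) (hmul_w _ hp)
    · show qk p * qk (X 4) ∈ TT
      rw [mul_comm]; exact hmul_u _ hp
    · show qk p * qk (X 5) ∈ TT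
      rw [mul_comm]; exact hmul_v _ hp
    · show qk p * qk (X 6) ∈ TT
      rw [mul_comm]; exact hmul_w _ hp

def UmZ : Matrix (Fin 12) (Fin 12) ℤ :=
  !![0, 0, 0, 0, 0, 0, 0, 0, 0, 0, 0, 0;
     1, 0, 0, 0, 0, 0, 0, 0, 0, 0, 0, 0;
     0, 0, 0, 0, 0, 0, 0, 0, 0, 0, 0, 0;
     0, 0, 0, 0, 0, 0, 0, 0, 0, 0, 0, 0;
     0, 1, 0, 0, 0, 0, 0, 0, 0, 0, 0, 0;
     0, 0, -1, 0, 0, 0, 0, 0, 0, 0, 0, 0;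
     0, 0, 1, 0, 0, 0, 0, 0, 0, 0, 0, 0;
     0, 0, 0, 0, 0, 0, 0, 0, 0, 0, 0, 0;
     0, 0, 0, 0, 0, -1, 0, 0, 0, 0, 0, 0;
     0, 0, 0, 0, 0, 1, 0, 0, 0, 0, 0, 0;
     0, 0, 0, 0, 1, 0, 0, 0, 0, 0, 0, 0;
     0, 0, 0, 0, 0, 0, 0, 0, 1, 0, 0, 0]

def VmZ : Matrix (Fin 12) (Fin 12) ℤ :=
  !![0, 0, 0, 0, 0, 0, 0, 0, 0, 0, 0, 0;
     0, 0, 0, 0, 0, 0, 0, 0, 0, 0, 0, 0;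
     1, 0, 0, 0, 0, 0, 0, 0, 0, 0, 0, 0;
     0, 0, 0, 0, 0, 0, 0, 0, 0, 0, 0, 0;
     0, 0, 0, 0, 0, 0, 0, 0, 0, 0, 0, 0;
     0, -1, 1, 0, 0, 0, 0, 0, 0, 0, 0, 0;
     0, 1, 0, 1, 0, 0, 0, 0, 0, 0, 0, 0;
     0, 0, 0, 0, 0, 0, 0, 0, 0, 0, 0, 0;
     0, 0, 0, 0, 1, 1, 0, 0, 0, 0, 0, 0;
     0, 0, 0, 0, -1, 0, 1, 1, 0, 0, 0, 0;
     0, 0, 0, 0, 0, 0, 0, 0, 0, 0, 0, 0;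
     0, 0, 0, 0, 0, 0, 0, 0, 0, 1, 1, 0]

def WmZ : Matrix (Fin 12) (Fin 12) ℤ :=
  !![0, 0, 0, 0, 0, 0, 0, 0, 0, 0, 0, 0;
     0, 0, 0, 0, 0, 0, 0, 0, 0, 0, 0, 0;
     0, 0, 0, 0, 0, 0, 0, 0, 0, 0, 0, 0;
     1, 0, 0, 0, 0, 0, 0, 0, 0, 0, 0, 0;
     0, 0, 0, 0, 0, 0, 0, 0, 0, 0, 0, 0;
     0, 0, 0, 0, 0, 0, 0, 0, 0, 0, 0, 0;
     0, 0, 1, 0, 0, 0, 0, 0, 0, 0, 0, 0;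
     0, 0, 0, 1, 0, 0, 0, 0, 0, 0, 0, 0;
     0, 0, 0, 0, 0, 0, 0, 0, 0, 0, 0, 0;
     0, 0, 0, 0, 0, 1, 1, 0, 0, 0, 0, 0;
     0, 0, 0, 0, 0, 0, 0, 1, 0, 0, 0, 0;
     0, 0, 0, 0, 0, 0, 0, 0, 1, 1, 0, 0]

lemma zc1 : UmZ * VmZ = VmZ * UmZ := by decide
lemma zc2 : UmZ * WmZ = WmZ * UmZ := by decide
lemma zc3 : VmZ * WmZ = WmZ * VmZ := by decide
lemma zr1 : UmZ * WmZ = 0 := by decide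
lemma zr2 : (UmZ + VmZ - WmZ) * VmZ = 0 := by decide
lemma zr3 : (UmZ - WmZ) * (UmZ - WmZ) * (UmZ - WmZ) = 0 := by decide

/-- The vector of products representing the twelve basis monomials in the
regular representation. -/
def MZ : Fin 12 → Matrix (Fin 12) (Fin 12) ℤ :=
  ![1, UmZ, VmZ, WmZ, UmZ * UmZ, VmZ * VmZ, VmZ * WmZ, WmZ * WmZ,
    VmZ * VmZ * VmZ, VmZ * VmZ * WmZ, WmZ * WmZ * WmZ, VmZ * (WmZ * WmZ * WmZ)]

lemma zcol : ∀ i k : Fin 12, MZ i k 0 = if k = i then 1 else 0 := by decide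

abbrev cM : Matrix (Fin 12) (Fin 12) ℤ →+* Matrix (Fin 12) (Fin 12) ℚ :=
  (Int.castRingHom ℚ).mapMatrix

def Um : Matrix (Fin 12) (Fin 12) ℚ := cM UmZ
def Vm : Matrix (Fin 12) (Fin 12) ℚ := cM VmZ
def Wm : Matrix (Fin 12) (Fin 12) ℚ := cM WmZ

def sM : Set (Matrix (Fin 12) (Fin 12) ℚ) := {Um, Vm, Wm}

lemma hcomm : ∀ a ∈ sM, ∀ b ∈ sM, a * b = b * a := by
  have c1 : Um * Vm = Vm * Um := by rw [Um, Vm, ← map_mul, ← map_mul, zc1]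
  have c2 : Um * Wm = Wm * Um := by rw [Um, Wm, ← map_mul, ← map_mul, zc2]
  have c3 : Vm * Wm = Wm * Vm := by rw [Vm, Wm, ← map_mul, ← map_mul, zc3]
  rintro a ha b hb
  simp only [sM, Set.mem_insert_iff, Set.mem_singleton_iff] at ha hb
  rcases ha with rfl | rfl | rfl <;> rcases hb with rfl | rfl | rfl <;>
    first
      | rfl
      | exact c1 | exact c1.symm | exact c2 | exact c2.symm | exact c3 | exact c3.symm

instance : CommRing (Algebra.adjoin ℚ sM) := Algebra.adjoinCommRingOfComm ℚ hcomm

def uA : Algebra.adjoin ℚ sM := ⟨Um, Algebra.subset_adjoin (by simp [sM])⟩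
def vA : Algebra.adjoin ℚ sM := ⟨Vm, Algebra.subset_adjoin (by simp [sM])⟩
def wA : Algebra.adjoin ℚ sM := ⟨Wm, Algebra.subset_adjoin (by simp [sM])⟩

def fv : Fin 7 → Algebra.adjoin ℚ sM := ![uA - wA, uA - wA, uA - wA, uA + vA - wA, uA, vA, wA]

def φ : MvPolynomial (Fin 7) ℚ →ₐ[ℚ] Algebra.adjoin ℚ sM := aeval fv


lemma relA1 : uA * wA = 0 := by
  refine Subtype.ext ?_
  show Um * Wm = (0 : Matrix (Fin 12) (Fin 12) ℚ)
  rw [Um, Wm, ← map_mul, zr1, map_zero]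

lemma relA2 : (uA + vA - wA) * vA = 0 := by
  refine Subtype.ext ?_
  show (Um + Vm - Wm) * Vm = (0 : Matrix (Fin 12) (Fin 12) ℚ)
  rw [Um, Vm, Wm, ← map_add, ← map_sub, ← map_mul, zr2, map_zero]

lemma relA3 : (uA - wA) * (uA - wA) * (uA - wA) = 0 := by
  refine Subtype.ext ?_
  show (Um - Wm) * (Um - Wm) * (Um - Wm) = (0 : Matrix (Fin 12) (Fin 12) ℚ)
  rw [Um, Wm, ← map_sub, ← map_mul, ← map_mul, zr3, map_zero]

lemma relA4 : uA - wA - uA + wA = 0 := by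
  refine Subtype.ext ?_
  show Um - Wm - Um + Wm = (0 : Matrix (Fin 12) (Fin 12) ℚ)
  abel

lemma relA5 : uA + vA - wA - uA - vA + wA = 0 := by
  refine Subtype.ext ?_
  show Um + Vm - Wm - Um - Vm + Wm = (0 : Matrix (Fin 12) (Fin 12) ℚ)
  abel

lemma phi0 : φ (X 0) = uA - wA := aeval_X fv 0
lemma phi1 : φ (X 1) = uA - wA := aeval_X fv 1
lemma phi2 : φ (X 2) = uA - wA := aeval_X fv 2
lemma phi3 : φ (X 3) = uA + vA - wA := aeval_X fv 3
lemma phi4 : φ (X 4) = uA := aeval_X fv 4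
lemma phi5 : φ (X 5) = vA := aeval_X fv 5
lemma phi6 : φ (X 6) = wA := aeval_X fv 6

set_option maxHeartbeats 1000000 in
set_option synthInstance.maxHeartbeats 200000 in
lemma hker : I2 ≤ RingHom.ker φ := by
  refine Ideal.span_le.mpr ?_
  rintro g hg
  simp only [Set.mem_insert_iff, Set.mem_singleton_iff] at hg
  rcases hg with rfl | rfl | rfl | rfl | rfl | rfl | rfl <;>
      simp only [SetLike.mem_coe, RingHom.mem_ker, map_sub, map_add, map_mul]
  · rw [phi0, phi4, phi6]; exact relA4
  · rw [phi1, phi4, phi6]; exact relA4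
  · rw [phi2, phi4, phi6]; exact relA4
  · rw [phi3, phi4, phi5, phi6]; exact relA5
  · rw [phi0, phi1, phi2]; exact relA3
  · rw [phi3, phi5]; exact relA2
  · rw [phi4, phi6]; exact relA1

def ψ : R2 →ₐ[ℚ] Algebra.adjoin ℚ sM :=
  Ideal.Quotient.liftₐ I2 φ fun a ha => by
    have h := hker ha
    rwa [RingHom.mem_ker] at h

lemma hψ (p : MvPolynomial (Fin 7) ℚ) : ψ (qk p) = φ p := by
  unfold ψ
  exact (Ideal.Quotient.liftₐ_apply I2 φ _ _).trans (Ideal.Quotient.lift_mk I2 _ _)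

def Aval : Algebra.adjoin ℚ sM →+* Matrix (Fin 12) (Fin 12) ℚ where
  toFun x := x.val
  map_one' := rfl
  map_mul' _ _ := rfl
  map_zero' := rfl
  map_add' _ _ := rfl

lemma hAs (a : ℚ) (x : Algebra.adjoin ℚ sM) : Aval (a • x) = a • Aval x := rfl

lemma hvals : ∀ i : Fin 12, Aval (ψ (r2BasisElems i)) = cM (MZ i) := by
  intro i
  fin_cases i
  · show Aval (ψ (qk 1)) = cM 1
    rw [map_one, map_one, map_one, map_one]
  · show Aval (ψ (qk (X 4))) = cM UmZ
    rw [hψ]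
    simp only [φ, aeval_X]
    rfl
  · show Aval (ψ (qk (X 5))) = cM VmZ
    rw [hψ]
    simp only [φ, aeval_X]
    rfl
  · show Aval (ψ (qk (X 6))) = cM WmZ
    rw [hψ]
    simp only [φ, aeval_X]
    rfl
  · show Aval (ψ (qk (X 4 ^ 2))) = cM (UmZ * UmZ)
    rw [hψ, map_pow, map_pow]
    simp only [φ, aeval_X]
    show Um ^ 2 = cM (UmZ * UmZ)
    rw [Um, sq, ← map_mul]
  · show Aval (ψ (qk (X 5 ^ 2))) = cM (VmZ * VmZ)
    rw [hψ, map_pow, map_pow]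
    simp only [φ, aeval_X]
    show Vm ^ 2 = cM (VmZ * VmZ)
    rw [Vm, sq, ← map_mul]
  · show Aval (ψ (qk (X 5 * X 6))) = cM (VmZ * WmZ)
    rw [hψ, map_mul, map_mul]
    simp only [φ, aeval_X]
    show Vm * Wm = cM (VmZ * WmZ)
    rw [Vm, Wm, ← map_mul]
  · show Aval (ψ (qk (X 6 ^ 2))) = cM (WmZ * WmZ)
    rw [hψ, map_pow, map_pow]
    simp only [φ, aeval_X]
    show Wm ^ 2 = cM (WmZ * WmZ)
    rw [Wm, sq, ← map_mul]
  · show Aval (ψ (qk (X 5 ^ 3))) = cM (VmZ * VmZ * VmZ)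
    rw [hψ, map_pow, map_pow]
    simp only [φ, aeval_X]
    show Vm ^ 3 = cM (VmZ * VmZ * VmZ)
    rw [Vm, pow_succ, sq, ← map_mul, ← map_mul]
  · show Aval (ψ (qk (X 5 ^ 2 * X 6))) = cM (VmZ * VmZ * WmZ)
    rw [hψ, map_mul, map_pow, map_mul, map_pow]
    simp only [φ, aeval_X]
    show Vm ^ 2 * Wm = cM (VmZ * VmZ * WmZ)
    rw [Vm, Wm, sq, ← map_mul, ← map_mul]
  · show Aval (ψ (qk (X 6 ^ 3))) = cM (WmZ * WmZ * WmZ)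
    rw [hψ, map_pow, map_pow]
    simp only [φ, aeval_X]
    show Wm ^ 3 = cM (WmZ * WmZ * WmZ)
    rw [Wm, pow_succ, sq, ← map_mul, ← map_mul]
  · show Aval (ψ (qk (X 5 * X 6 ^ 3))) = cM (VmZ * (WmZ * WmZ * WmZ))
    rw [hψ, map_mul, map_pow, map_mul, map_pow]
    simp only [φ, aeval_X]
    show Vm * Wm ^ 3 = cM (VmZ * (WmZ * WmZ * WmZ))
    rw [Vm, Wm, pow_succ, sq, ← map_mul, ← map_mul, ← map_mul]

end R2Aux

set_option maxHeartbeats 1000000 in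
set_option synthInstance.maxHeartbeats 200000 in
/-- The images of `1, x₅, x₆, x₇, x₅², x₆², x₆x₇, x₇², x₆³, x₆²x₇, x₇³, x₆x₇³` form a
`ℚ`-basis of `R₂ = ℚ[x₁,…,x₇]/I₂`; in particular `dim_ℚ R₂ = 12`. -/
theorem r2_basis :
    LinearIndependent ℚ r2BasisElems ∧
    Submodule.span ℚ (Set.range r2BasisElems) = ⊤ ∧
    Module.finrank ℚ R2 = 12 := by
  have hLI : LinearIndependent ℚ r2BasisElems := by
    refine (@Fintype.linearIndependent_iff _ ℚ R2 _ _ Algebra.toModule r2BasisElems _).mpr ?_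
    intro c hc k
    have h1 : ∑ i, c i • R2Aux.Aval (R2Aux.ψ (r2BasisElems i)) = 0 := by
      have h := congrArg R2Aux.ψ hc
      rw [map_sum, map_zero] at h
      simp only [map_smul] at h
      have h' := congrArg R2Aux.Aval h
      rw [map_sum, map_zero] at h'
      simp only [R2Aux.hAs] at h'
      exact h' 
    simp only [R2Aux.hvals] at h1
    have h2 := congrArg (fun M => M k 0) h1
    simp only [Matrix.sum_apply, Matrix.smul_apply, Matrix.zero_apply,
      RingHom.mapMatrix_apply, Matrix.map_apply, smul_eq_mul, R2Aux.zcol,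
      apply_ite (⇑(Int.castRingHom ℚ)), map_one, map_zero, Int.cast_one, Int.cast_zero,
      mul_ite, mul_one, mul_zero, Finset.sum_ite_eq, Finset.mem_univ, if_true] at h2
    exact h2
  have hSp : Submodule.span ℚ (Set.range r2BasisElems) = ⊤ := R2Aux.span_top
  refine ⟨hLI, hSp, ?_⟩
  have b : Module.Basis (Fin 12) ℚ R2 := Module.Basis.mk hLI hSp.ge
  rw [Module.finrank_eq_card_basis b, Fintype.card_fin]

end
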